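/- arXiv:1504.00743 — 2 statements merged into one kernel-verified Lean document; each statement's English description precedes it below -/
import Mathlib

section
/- In a Hopf algebra H, a two-sided cointegral Λ (an element with xΛ = Λx = ε(x)Λ for all x) is unique up to scalar multiple: if Λ and Λ' are both nonzero two-sided cointegrals then Λ' = cΛ for some scalar c. -/
/-!
Let `Λ` be a nonzero right cointegral and slice `ΔΛ` on the right by functionals `φ`, giving
`(id ⊗ φ) ΔΛ`. Because `ΔΛ · Δx = ε(x) ΔΛ`, one has `ΔΛ (x ⊗ 1) = ΔΛ (1 ⊗ S x)`, so these slices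
form a right ideal; it contains `1 = Σ Λ₁ S(f(Λ₂₂) Λ₂₁)` for any `f` with `f Λ = 1`. Hence
`(id ⊗ l) ΔΛ = 1` for some `l`, and then `x = (id ⊗ l)(ΔΛ (1 ⊗ S x))`, so `S` is injective and,
`H` being finite-dimensional, bijective. For a left cointegral `y = S x` we have
`ΔΛ (1 ⊗ y) = Λ ⊗ y`, whence `x = l(y) Λ` and `y = l(y) SΛ`. Thus every left cointegral lies on
the line through `SΛ`; as `Λ` is itself a left cointegral, that line is the line through `Λ`.
-/

open TensorProduct Coalgebra HopfAlgebra

namespace HopfAlgebra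

variable {R A : Type*} [CommSemiring R]

section Slice

variable [AddCommMonoid A] [Module R A]

noncomputable def rightSlice (φ : A →ₗ[R] R) : A ⊗[R] A →ₗ[R] A :=
  (TensorProduct.rid R A).toLinearMap ∘ₗ φ.lTensor A

@[simp]
theorem rightSlice_tmul (φ : A →ₗ[R] R) (a b : A) : rightSlice φ (a ⊗ₜ b) = φ b • a := by
  simp [rightSlice]

theorem rightSlice_sum {ι : Type*} (s : Finset ι) (φ : ι → A →ₗ[R] R) (u : A ⊗[R] A) :
    rightSlice (∑ k ∈ s, φ k) u = ∑ k ∈ s, rightSlice (φ k) u := by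
  induction u using TensorProduct.induction_on with
  | zero => simp
  | tmul a b => simp [LinearMap.sum_apply, Finset.sum_smul]
  | add u v hu hv => simp [hu, hv, Finset.sum_add_distrib]

theorem rightSlice_counit_comul [Coalgebra R A] (a : A) :
    rightSlice (counit (R := R)) (comul a) = a := by
  simp [rightSlice]

theorem sum_counit_right_smul [Coalgebra R A] {a : A} {ι : Type*} (r : Repr R a ι) :
    ∑ i ∈ r.index, counit (R := R) (r.right i) • r.left i = a := by
  simpa [← r.eq, map_sum] using rightSlice_counit_comul (R := R) a

end Slice

section Algebra

variable [Semiring A] [Algebra R A]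

theorem rightSlice_mul_tmul_one (φ : A →ₗ[R] R) (x : A) (u : A ⊗[R] A) :
    rightSlice φ (u * (x ⊗ₜ 1)) = rightSlice φ u * x := by
  induction u using TensorProduct.induction_on with
  | zero => simp
  | tmul a b => simp
  | add u v hu hv => simp [add_mul, hu, hv]

theorem rightSlice_mul_one_tmul (φ : A →ₗ[R] R) (y : A) (u : A ⊗[R] A) :
    rightSlice φ (u * (1 ⊗ₜ y)) = rightSlice (φ ∘ₗ LinearMap.mulRight R y) u := by
  induction u using TensorProduct.induction_on with
  | zero => simp
  | tmul a b => simp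
  | add u v hu hv => simp [add_mul, hu, hv]

theorem mul'_lTensor_eq_sum_rightSlice_mul {ι : Type*} [Fintype ι] (b : Module.Basis ι R A)
    (g : A →ₗ[R] A) (u : A ⊗[R] A) :
    LinearMap.mul' R A (g.lTensor A u) = ∑ k, rightSlice (b.coord k ∘ₗ g) u * b k := by
  induction u using TensorProduct.induction_on with
  | zero => simp
  | tmul a c =>
    rw [LinearMap.lTensor_tmul, LinearMap.mul'_apply]
    conv_lhs => rw [← b.sum_repr (g c), Finset.mul_sum]
    simp
  | add u v hu hv => simp [hu, hv, add_mul, Finset.sum_add_distrib]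

end Algebra

section Bialgebra

variable [Semiring A] [Bialgebra R A]

variable (R) in
def IsLeftCointegral (Λ : A) : Prop := ∀ x : A, x * Λ = counit (R := R) x • Λ

variable (R) in
def IsRightCointegral (Λ : A) : Prop := ∀ x : A, Λ * x = counit (R := R) x • Λ

theorem IsLeftCointegral.mul_one_tmul {y : A} (hy : IsLeftCointegral R y) (u : A ⊗[R] A) :
    u * (1 ⊗ₜ y) = rightSlice counit u ⊗ₜ y := by
  induction u using TensorProduct.induction_on with
  | zero => simp
  | tmul a b => simp [hy b, smul_tmul']
  | add u v hu hv => simp [add_mul, hu, hv, add_tmul]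

theorem IsRightCointegral.comul_mul_comul {Λ : A} (hΛ : IsRightCointegral R Λ) (y : A) :
    comul Λ * comul y = counit (R := R) y • comul (R := R) Λ := by
  rw [← Bialgebra.comul_mul, hΛ y, map_smul]

end Bialgebra

section Hopf

variable [Semiring A] [HopfAlgebra R A]

theorem sum_comul_mul_one_tmul_antipode {x : A} {ι : Type*} (r : Repr R x ι) :
    ∑ i ∈ r.index, comul (R := R) (r.left i) * (1 ⊗ₜ antipode R (r.right i)) = x ⊗ₜ[R] 1 := by
  let F : A ⊗[R] (A ⊗[R] A) →ₗ[R] A ⊗[R] A :=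
    (LinearMap.mul' R A ∘ₗ (antipode R).lTensor A).lTensor A
  have h := congrArg F
    (sum_tmul_tmul_eq r (fun i ↦ ℛ R (r.left i)) (fun i ↦ ℛ R (r.right i)))
  simp only [F, map_sum, LinearMap.lTensor_tmul, LinearMap.comp_apply, LinearMap.mul'_apply,
    ← tmul_sum, sum_mul_antipode_eq_smul] at h
  calc ∑ i ∈ r.index, comul (R := R) (r.left i) * (1 ⊗ₜ antipode R (r.right i))
      = ∑ i ∈ r.index, ∑ j ∈ (ℛ R (r.left i)).index,
          (ℛ R (r.left i)).left j ⊗ₜ[R] ((ℛ R (r.left i)).right j * antipode R (r.right i)) := by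
        simp only [← (ℛ R (r.left _)).eq, Finset.sum_mul, Algebra.TensorProduct.tmul_mul_tmul,
          mul_one]
    _ = x ⊗ₜ[R] 1 := by
        rw [h]
        simp only [tmul_smul, smul_tmul', ← sum_tmul, sum_counit_right_smul]

theorem mul_tmul_one_eq_mul_one_tmul_antipode (t : A ⊗[R] A)
    (ht : ∀ y : A, t * comul y = counit (R := R) y • t) (x : A) :
    t * (x ⊗ₜ 1) = t * (1 ⊗ₜ antipode R x) := by
  let r := ℛ R x
  calc t * (x ⊗ₜ 1)
      = ∑ i ∈ r.index, t * comul (r.left i) * (1 ⊗ₜ antipode R (r.right i)) := by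
        simp only [← sum_comul_mul_one_tmul_antipode r, Finset.mul_sum, mul_assoc]
    _ = t * (1 ⊗ₜ antipode R (∑ i ∈ r.index, counit (R := R) (r.left i) • r.right i)) := by
        simp only [ht, smul_mul_assoc, map_sum, map_smul, tmul_sum, tmul_smul, Finset.mul_sum,
          mul_smul_comm]
    _ = t * (1 ⊗ₜ antipode R x) := by rw [sum_counit_smul]

theorem mul'_lTensor_antipode_rightSlice_comul (f : A →ₗ[R] R) (a : A) :
    LinearMap.mul' R A ((antipode R ∘ₗ rightSlice f ∘ₗ comul).lTensor A (comul a)) = f a • 1 := by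
  let r := ℛ R a
  let G : A ⊗[R] (A ⊗[R] A) →ₗ[R] A :=
    LinearMap.mul' R A ∘ₗ (rightSlice f ∘ₗ (antipode R).rTensor A).lTensor A
  have h := congrArg G
    (sum_tmul_tmul_eq r (fun i ↦ ℛ R (r.left i)) (fun i ↦ ℛ R (r.right i)))
  simp only [G, map_sum, LinearMap.lTensor_tmul, LinearMap.rTensor_tmul, LinearMap.comp_apply,
    rightSlice_tmul, LinearMap.mul'_apply, mul_smul_comm, ← Finset.smul_sum,
    sum_mul_antipode_eq_smul] at h
  rw [← r.eq]
  simp only [map_sum, LinearMap.lTensor_tmul, LinearMap.comp_apply, LinearMap.mul'_apply]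
  simp only [← (ℛ R (r.right _)).eq, map_sum, rightSlice_tmul, map_smul, Finset.mul_sum,
    mul_smul_comm]
  rw [← h]
  conv_rhs => rw [← sum_counit_smul r, map_sum, Finset.sum_smul]
  refine Finset.sum_congr rfl fun i _ ↦ ?_
  rw [map_smul, smul_eq_mul, mul_smul, smul_comm]

theorem IsRightCointegral.comul_mul_tmul_one {Λ : A} (hΛ : IsRightCointegral R Λ) (x : A) :
    comul Λ * (x ⊗ₜ 1) = comul (R := R) Λ * (1 ⊗ₜ antipode R x) :=
  mul_tmul_one_eq_mul_one_tmul_antipode _ hΛ.comul_mul_comul x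

theorem IsRightCointegral.rightSlice_comul_mul {Λ : A} (hΛ : IsRightCointegral R Λ)
    (φ : A →ₗ[R] R) (x : A) :
    rightSlice φ (comul Λ) * x =
      rightSlice (φ ∘ₗ LinearMap.mulRight R (antipode R x)) (comul Λ) := by
  rw [← rightSlice_mul_tmul_one, hΛ.comul_mul_tmul_one, rightSlice_mul_one_tmul]

theorem IsRightCointegral.leftInverse_antipode {Λ : A} (hΛ : IsRightCointegral R Λ)
    {l : A →ₗ[R] R} (hl : rightSlice l (comul Λ) = 1) :
    Function.LeftInverse (fun y ↦ rightSlice l (comul Λ * (1 ⊗ₜ y))) (antipode R) := fun x ↦ by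
  simp only [← hΛ.comul_mul_tmul_one, rightSlice_mul_tmul_one, hl, one_mul]

end Hopf

section Field

variable {K : Type*} [Field K] [Ring A] [HopfAlgebra K A] [FiniteDimensional K A]

theorem IsRightCointegral.exists_rightSlice_comul_eq_one {Λ : A} (hΛ : IsRightCointegral K Λ)
    (hΛ0 : Λ ≠ 0) : ∃ l : A →ₗ[K] K, rightSlice l (comul Λ) = 1 := by
  obtain ⟨f, hf⟩ := Module.Projective.exists_dual_eq_one K hΛ0
  let b := Module.finBasis K A
  let N := antipode K ∘ₗ rightSlice f ∘ₗ comul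
  refine ⟨∑ k, (b.coord k ∘ₗ N) ∘ₗ LinearMap.mulRight K (antipode K (b k)), ?_⟩
  calc rightSlice (∑ k, (b.coord k ∘ₗ N) ∘ₗ LinearMap.mulRight K (antipode K (b k))) (comul Λ)
      = ∑ k, rightSlice (b.coord k ∘ₗ N) (comul Λ) * b k := by
        simp only [rightSlice_sum, hΛ.rightSlice_comul_mul]
    _ = LinearMap.mul' K A (N.lTensor A (comul Λ)) :=
        (mul'_lTensor_eq_sum_rightSlice_mul b N _).symm
    _ = 1 := by rw [mul'_lTensor_antipode_rightSlice_comul, hf, one_smul]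

theorem IsRightCointegral.mem_span_antipode {Λ y : A} (hΛ : IsRightCointegral K Λ)
    (hΛ0 : Λ ≠ 0) (hy : IsLeftCointegral K y) : y ∈ K ∙ antipode K Λ := by
  obtain ⟨l, hl⟩ := hΛ.exists_rightSlice_comul_eq_one hΛ0
  have hinv := hΛ.leftInverse_antipode hl
  obtain ⟨x, rfl⟩ := LinearMap.injective_iff_surjective.mp hinv.injective y
  have hx : x = l (antipode K x) • Λ := by
    simpa [hy.mul_one_tmul, rightSlice_counit_comul] using (hinv x).symm
  exact Submodule.mem_span_singleton.mpr ⟨l (antipode K x), by rw [← map_smul, ← hx]⟩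

end Field

end HopfAlgebra

theorem cointegral_unique_up_to_scalar_general {H : Type*} [Ring H] [HopfAlgebra ℂ H]
    [FiniteDimensional ℂ H]
    (Λ Λ' : H) (hΛ : Λ ≠ 0)
    (hco : ∀ x : H, x * Λ = Coalgebra.counit (R := ℂ) x • Λ)
    (hco' : ∀ x : H, Λ * x = Coalgebra.counit (R := ℂ) x • Λ)
    (hco2 : ∀ x : H, x * Λ' = Coalgebra.counit (R := ℂ) x • Λ') :
    ∃ c : ℂ, Λ' = c • Λ := by
  have hΛr : IsRightCointegral ℂ Λ := hco'
  obtain ⟨c, hc⟩ := Submodule.mem_span_singleton.mp (hΛr.mem_span_antipode hΛ hco)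
  have hc0 : IsUnit c := isUnit_iff_ne_zero.mpr (left_ne_zero_of_smul (hc ▸ hΛ))
  have hΛ' := hΛr.mem_span_antipode hΛ hco2
  rw [← Submodule.span_singleton_smul_eq hc0, hc] at hΛ'
  obtain ⟨c', hc'⟩ := Submodule.mem_span_singleton.mp hΛ'
  exact ⟨c', hc'.symm⟩

/-- In a finite-dimensional Hopf algebra `H` over `ℂ`, a two-sided
cointegral (an element `Λ` with `x*Λ = Λ*x = ε(x)•Λ` for all `x`) is unique up to a
scalar multiple: if `Λ` and `Λ'` are both nonzero two-sided cointegrals then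
`Λ' = c • Λ` for some scalar `c`. -/
theorem cointegral_unique_up_to_scalar {H : Type*} [Ring H] [HopfAlgebra ℂ H]
    [FiniteDimensional ℂ H]
    (Λ Λ' : H) (hΛ : Λ ≠ 0) (hΛ' : Λ' ≠ 0)
    (hco : ∀ x : H, x * Λ = Coalgebra.counit (R := ℂ) x • Λ)
    (hco' : ∀ x : H, Λ * x = Coalgebra.counit (R := ℂ) x • Λ)
    (hco2 : ∀ x : H, x * Λ' = Coalgebra.counit (R := ℂ) x • Λ')
    (hco2' : ∀ x : H, Λ' * x = Coalgebra.counit (R := ℂ) x • Λ') :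
    ∃ c : ℂ, Λ' = c • Λ :=
  cointegral_unique_up_to_scalar_general Λ Λ' hΛ hco hco' hco2
end

section
/- In a quasitriangular Hopf algebra (H, R), the Drinfeld element u = Σ_k S(t_k) s_k (where R = Σ_k s_k ⊗ t_k) satisfies S²(x) = u x u⁻¹ for all x ∈ H. -/
open TensorProduct

noncomputable section

variable {H : Type*} [Ring H] [HopfAlgebra ℂ H]

/-- `a ⊗ b ↦ a ⊗ b ⊗ 1` in `H ⊗ (H ⊗ H)`. -/
def R12 (R : H ⊗[ℂ] H) : H ⊗[ℂ] (H ⊗[ℂ] H) :=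
  (Algebra.TensorProduct.map (AlgHom.id ℂ H) Algebra.TensorProduct.includeLeft) R

/-- `a ⊗ b ↦ a ⊗ 1 ⊗ b` in `H ⊗ (H ⊗ H)`. -/
def R13 (R : H ⊗[ℂ] H) : H ⊗[ℂ] (H ⊗[ℂ] H) :=
  (Algebra.TensorProduct.map (AlgHom.id ℂ H) Algebra.TensorProduct.includeRight) R

/-- `a ⊗ b ↦ 1 ⊗ a ⊗ b` in `H ⊗ (H ⊗ H)`. -/
def R23 (R : H ⊗[ℂ] H) : H ⊗[ℂ] (H ⊗[ℂ] H) :=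
  (Algebra.TensorProduct.includeRight : (H ⊗[ℂ] H) →ₐ[ℂ] H ⊗[ℂ] (H ⊗[ℂ] H)) R

/-- `R` is an `R`-matrix making `H` quasitriangular: `R` is invertible,
`R Δ(x) R⁻¹ = Δᵒᵖ(x)`, `(id ⊗ Δ)R = R₁₃R₁₂` and `(Δ ⊗ id)R = R₁₃R₂₃`. -/
def IsRMatrix (R : H ⊗[ℂ] H) : Prop :=
  IsUnit R ∧
  (∀ x : H, R * Coalgebra.comul x
      = (TensorProduct.comm ℂ H H) (Coalgebra.comul (R := ℂ) x) * R) ∧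
  (TensorProduct.map LinearMap.id (Bialgebra.comulAlgHom ℂ H).toLinearMap) R
      = R13 R * R12 R ∧
  (TensorProduct.assoc ℂ H H H)
      ((TensorProduct.map (Bialgebra.comulAlgHom ℂ H).toLinearMap LinearMap.id) R)
      = R13 R * R23 R

/-- The Drinfeld element `u = Σ S(t_k) s_k` of a quasitriangular Hopf algebra,
where `R = Σ s_k ⊗ t_k`. -/
def drinfeldElement (R : H ⊗[ℂ] H) : H :=
  (LinearMap.mul' ℂ H)
    ((TensorProduct.map (HopfAlgebra.antipode (R := ℂ)) LinearMap.id)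
      ((TensorProduct.comm ℂ H H) R))

/-!
Write `R = ∑ sᵢ ⊗ tᵢ`. Applying `a ⊗ b ↦ S(b) a` to `R Δ(y) = Δᵒᵖ(y) R` shows
`∑ S(y₂) u y₁ = ε(y) u`, and evaluating `a ⊗ b ⊗ c ↦ S(b S(c)) u a` on the two sides of
coassociativity turns this into `S²(x) u = u x`. Contracting the relation `(id ⊗ Δ)R = R₁₃R₁₂`
with `id ⊗ id ⊗ ε` (and cancelling `R`) gives `(id ⊗ ε)R = 1`; contracting it with `b ⊗ c ↦ b S(c)`
then gives `∑ tⱼ S(tᵢ) sᵢ sⱼ = 1`, i.e. `v = ∑ tᵢ S²(sᵢ)` is a left inverse of `u`. In finite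
dimension `H` is Artinian, so `v` is a two-sided inverse.
-/

open Coalgebra HopfAlgebra

lemma Coalgebra.sum_counit_right_smul {K A : Type*} [CommSemiring K] [AddCommMonoid A]
    [Module K A] [Coalgebra K A] {a : A} {ι : Type*} (r : Repr K a ι) :
    ∑ i ∈ r.index, counit (R := K) (r.right i) • r.left i = a := by
  have h := congr(_root_.TensorProduct.rid K A $(sum_tmul_counit_eq r))
  simpa only [map_sum, _root_.TensorProduct.rid_tmul, one_smul] using h

namespace HopfAlgebra

variable {K A : Type*} [CommSemiring K] [Semiring A] [HopfAlgebra K A]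

theorem antipode_antipode_mul_eq_mul {u : A}
    (hu : ∀ y : A, ∑ i ∈ (ℛ K y).index,
      antipode K ((ℛ K y).right i) * u * (ℛ K y).left i = counit (R := K) y • u)
    (x : A) : antipode K (antipode K x) * u = u * x := by
  let r := ℛ K x
  let r₁ := fun i ↦ ℛ K (r.left i)
  let ψ : A ⊗[K] (A ⊗[K] A) →ₗ[K] A := LinearMap.mul' K A ∘ₗ
    TensorProduct.map (antipode K ∘ₗ LinearMap.mul' K A ∘ₗ (antipode K).lTensor A)
      (LinearMap.mulLeft K u) ∘ₗ (TensorProduct.comm K A (A ⊗[K] A)).toLinearMap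
  have hψ : ∀ a b c, ψ (a ⊗ₜ (b ⊗ₜ c)) = antipode K (b * antipode K c) * (u * a) := by
    intro a b c; simp [ψ]
  have hcoassoc := congr(ψ $(sum_tmul_tmul_eq r r₁ (fun i ↦ ℛ K (r.right i))))
  simp only [map_sum, hψ] at hcoassoc
  calc antipode K (antipode K x) * u
      = ∑ i ∈ r.index, antipode K (antipode K (r.right i)) * (counit (R := K) (r.left i) • u) := by
        conv_lhs => rw [← sum_counit_smul r]
        simp only [map_sum, map_smul, Finset.sum_mul, smul_mul_assoc, mul_smul_comm]
    _ = ∑ i ∈ r.index, ∑ j ∈ (r₁ i).index,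
          antipode K ((r₁ i).right j * antipode K (r.right i)) * (u * (r₁ i).left j) := by
        refine Finset.sum_congr rfl fun i _ ↦ ?_
        rw [← hu, Finset.mul_sum]
        refine Finset.sum_congr rfl fun j _ ↦ ?_
        rw [antipode_mul_antidistrib]
        simp only [r₁, mul_assoc]
    _ = _ := hcoassoc
    _ = ∑ i ∈ r.index, antipode K (counit (R := K) (r.right i) • 1) * (u * r.left i) := by
        refine Finset.sum_congr rfl fun i _ ↦ ?_
        rw [← Finset.sum_mul, ← map_sum, sum_mul_antipode_eq_smul]
    _ = u * x := by
        simp only [map_smul, antipode_one, smul_mul_assoc, one_mul, ← mul_smul_comm,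
          ← Finset.mul_sum, sum_counit_right_smul]

end HopfAlgebra

section RMatrix

variable {R : H ⊗[ℂ] H} {F : Finset (H × H)}

theorem drinfeldElement_eq_sum (hF : R = ∑ p ∈ F, p.1 ⊗ₜ[ℂ] p.2) :
    drinfeldElement R = ∑ p ∈ F, antipode ℂ p.2 * p.1 := by
  simp [drinfeldElement, hF]

theorem sum_antipode_mul_drinfeldElement_mul
    (hcomm : ∀ x : H, R * comul x = TensorProduct.comm ℂ H H (comul (R := ℂ) x) * R) (y : H) :
    ∑ i ∈ (ℛ ℂ y).index, antipode ℂ ((ℛ ℂ y).right i) * drinfeldElement R * (ℛ ℂ y).left i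
      = counit (R := ℂ) y • drinfeldElement R := by
  obtain ⟨F, hF⟩ := TensorProduct.exists_finset (R := ℂ) R
  let r := ℛ ℂ y
  let φ : H ⊗[ℂ] H →ₗ[ℂ] H := LinearMap.mul' ℂ H ∘ₗ
    TensorProduct.map (antipode ℂ) LinearMap.id ∘ₗ (TensorProduct.comm ℂ H H).toLinearMap
  have hφ : ∀ a b, φ (a ⊗ₜ b) = antipode ℂ b * a := fun a b ↦ by simp [φ]
  have h := congr(φ $(hcomm y))
  rw [hF, ← r.eq] at h
  simp only [map_sum, TensorProduct.comm_tmul, Finset.sum_mul_sum,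
    Algebra.TensorProduct.tmul_mul_tmul, hφ, antipode_mul_antidistrib] at h
  rw [drinfeldElement_eq_sum hF]
  calc _ = ∑ p ∈ F, ∑ i ∈ r.index,
          antipode ℂ (r.right i) * antipode ℂ p.2 * (p.1 * r.left i) := by
        rw [Finset.sum_comm]
        simp only [r, Finset.mul_sum, Finset.sum_mul, mul_assoc]
    _ = ∑ p ∈ F,
          antipode ℂ p.2 * (∑ i ∈ r.index, antipode ℂ (r.left i) * r.right i) * p.1 := by
        rw [h, Finset.sum_comm]
        simp only [Finset.mul_sum, Finset.sum_mul, mul_assoc]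
    _ = _ := by
        simp only [sum_antipode_mul_eq_smul, mul_smul_comm, smul_mul_assoc, mul_one,
          Finset.smul_sum]

theorem sum_tmul_comul_eq_sum_sum (hF : R = ∑ p ∈ F, p.1 ⊗ₜ[ℂ] p.2)
    (hhex : TensorProduct.map LinearMap.id (Bialgebra.comulAlgHom ℂ H).toLinearMap R
      = R13 R * R12 R) :
    ∑ p ∈ F, p.1 ⊗ₜ[ℂ] comul (R := ℂ) p.2
      = ∑ p ∈ F, ∑ q ∈ F, (p.1 * q.1) ⊗ₜ[ℂ] (q.2 ⊗ₜ[ℂ] p.2) := by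
  have h1312 : R13 R * R12 R = ∑ p ∈ F, ∑ q ∈ F, (p.1 * q.1) ⊗ₜ[ℂ] (q.2 ⊗ₜ[ℂ] p.2) := by
    simp [R13, R12, hF, Finset.sum_mul_sum, Algebra.TensorProduct.tmul_mul_tmul]
  rw [← h1312, ← hhex, hF]
  simp

theorem sum_counit_smul_eq_one (hunit : IsUnit R) (hF : R = ∑ p ∈ F, p.1 ⊗ₜ[ℂ] p.2)
    (hhex : TensorProduct.map LinearMap.id (Bialgebra.comulAlgHom ℂ H).toLinearMap R
      = R13 R * R12 R) :
    ∑ p ∈ F, counit (R := ℂ) p.2 • p.1 = 1 := by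
  set w := ∑ p ∈ F, counit (R := ℂ) p.2 • p.1
  let κ : H ⊗[ℂ] H →ₗ[ℂ] H :=
    (TensorProduct.rid ℂ H).toLinearMap ∘ₗ (counit (R := ℂ)).lTensor H
  have hκ : ∀ a b, κ (a ⊗ₜ b) = counit (R := ℂ) b • a := fun a b ↦ by simp [κ]
  have hκ_comul : ∀ a, κ (comul a) = a := fun a ↦ by simp [κ, lTensor_counit_comul]
  have h := congr(κ.lTensor H $(sum_tmul_comul_eq_sum_sum hF hhex))
  simp only [map_sum, LinearMap.lTensor_tmul, hκ_comul, hκ] at h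
  have hwR : (w ⊗ₜ[ℂ] (1 : H)) * R = 1 * R := by
    rw [one_mul]
    conv_rhs => rw [hF, h, Finset.sum_comm]
    rw [hF, Finset.mul_sum]
    refine Finset.sum_congr rfl fun q _ ↦ ?_
    simp only [w, Algebra.TensorProduct.tmul_mul_tmul, one_mul, Finset.sum_mul,
      TensorProduct.sum_tmul, smul_mul_assoc, TensorProduct.smul_tmul]
  simpa [Algebra.TensorProduct.one_def, hκ] using congr(κ $(hunit.mul_right_cancel hwR))

theorem sum_sum_mul_antipode_mul_mul_eq_one (hunit : IsUnit R)
    (hF : R = ∑ p ∈ F, p.1 ⊗ₜ[ℂ] p.2)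
    (hhex : TensorProduct.map LinearMap.id (Bialgebra.comulAlgHom ℂ H).toLinearMap R
      = R13 R * R12 R) :
    ∑ p ∈ F, ∑ q ∈ F, q.2 * antipode ℂ p.2 * (p.1 * q.1) = 1 := by
  let σ : H ⊗[ℂ] H →ₗ[ℂ] H := LinearMap.mul' ℂ H ∘ₗ (antipode ℂ).lTensor H
  have hσ : ∀ a b, σ (a ⊗ₜ b) = a * antipode ℂ b := fun a b ↦ by simp [σ]
  have hσ_comul : ∀ a, σ (comul a) = counit (R := ℂ) a • 1 := fun a ↦ by
    simp [σ, Algebra.algebraMap_eq_smul_one]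
  have h := congr(LinearMap.mul' ℂ H
    (TensorProduct.comm ℂ H H (σ.lTensor H $(sum_tmul_comul_eq_sum_sum hF hhex))))
  simp only [map_sum, LinearMap.lTensor_tmul, hσ_comul, hσ, TensorProduct.comm_tmul,
    LinearMap.mul'_apply, smul_mul_assoc, one_mul] at h
  rw [← sum_counit_smul_eq_one hunit hF hhex, h]

theorem antipode_antipode_mul_drinfeldElement
    (hcomm : ∀ x : H, R * comul x = TensorProduct.comm ℂ H H (comul (R := ℂ) x) * R) (x : H) :
    antipode ℂ (antipode ℂ x) * drinfeldElement R = drinfeldElement R * x :=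
  antipode_antipode_mul_eq_mul (sum_antipode_mul_drinfeldElement_mul hcomm) x

theorem exists_mul_drinfeldElement_eq_one (hR : IsRMatrix R) :
    ∃ v : H, v * drinfeldElement R = 1 := by
  obtain ⟨hunit, hcomm, hhex, -⟩ := hR
  obtain ⟨F, hF⟩ := TensorProduct.exists_finset (R := ℂ) R
  refine ⟨∑ p ∈ F, p.2 * antipode ℂ (antipode ℂ p.1), ?_⟩
  calc (∑ p ∈ F, p.2 * antipode ℂ (antipode ℂ p.1)) * drinfeldElement R
      = ∑ p ∈ F, p.2 * (drinfeldElement R * p.1) := by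
        simp only [Finset.sum_mul, mul_assoc, antipode_antipode_mul_drinfeldElement hcomm]
    _ = ∑ q ∈ F, ∑ p ∈ F, p.2 * antipode ℂ q.2 * (q.1 * p.1) := by
        rw [Finset.sum_comm, drinfeldElement_eq_sum hF]
        simp only [Finset.mul_sum, Finset.sum_mul, mul_assoc]
    _ = 1 := sum_sum_mul_antipode_mul_mul_eq_one hunit hF hhex

end RMatrix

/-- In a quasitriangular Hopf algebra `(H, R)`, the Drinfeld element
`u = Σ S(t_k) s_k` is invertible and satisfies `S²(x) = u x u⁻¹` for all `x ∈ H`. -/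
theorem drinfeld_element_conjugates_antipode_sq
    {H : Type*} [Ring H] [HopfAlgebra ℂ H] [FiniteDimensional ℂ H]
    (R : H ⊗[ℂ] H) (hR : IsRMatrix R) :
    ∃ v : H, drinfeldElement R * v = 1 ∧ v * drinfeldElement R = 1 ∧
      ∀ x : H, HopfAlgebra.antipode (R := ℂ) (HopfAlgebra.antipode (R := ℂ) x)
        = drinfeldElement R * x * v := by
  have : IsArtinianRing H := IsArtinianRing.of_finite ℂ H
  obtain ⟨v, hvu⟩ := exists_mul_drinfeldElement_eq_one hR
  have huv : drinfeldElement R * v = 1 := mul_eq_one_comm.mp hvu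
  refine ⟨v, huv, hvu, fun x ↦ ?_⟩
  rw [← antipode_antipode_mul_drinfeldElement hR.2.1, mul_assoc, huv, mul_one]

end
end
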